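/- Consider the total variation flow ∂_t u = (sgn(u_x))_x on 𝕋 = ℝ/ℤ with initial datum u₀(x) = 1 for x ∈ (0,a) and u₀(x) = 0 for x ∈ (a,1), where a ∈ (0,1). Then the function u(t,x) = 1 − (2/a)t for t ≤ a(1−a)/2 and x ∈ (0,a); u(t,x) = (2/(1−a))t for t ≤ a(1−a)/2 and x ∈ (a,1); and u(t,x) = a for t ≥ a(1−a)/2, is a finite energy solution: for a.e. t there is Ω(·,t) ∈ H¹(𝕋) with Ω(x,t) ∈ sgn(u_x(x,t)) a.e. (a selection of the maximal monotone graph sgn) such that ⟨u_t, φ⟩ = −∫_𝕋 Ω φ_x dx for all φ ∈ C^∞(𝕋). -/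

import Mathlib

open MeasureTheory

/-- Extinction time `a(1-a)/2`. -/
noncomputable def tstar (a : ℝ) : ℝ := a * (1 - a) / 2

/-- The explicit candidate solution of the total variation flow with step initial datum:
`u(t,x) = 1 - (2/a)t` on `(0,a)` and `(2/(1-a))t` on `(a,1)` for `t ≤ a(1-a)/2`, and
`u(t,x) = a` afterwards. At `t = 0` this is the initial datum `u₀`. -/
noncomputable def uTV (a t x : ℝ) : ℝ :=
  if t < tstar a then (if x < a then 1 - 2 / a * t else 2 / (1 - a) * t) else a

/-- The time derivative of `uTV`. -/
noncomputable def utTV (a t x : ℝ) : ℝ :=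
  if t < tstar a then (if x < a then -(2 / a) else 2 / (1 - a)) else 0

lemma step_measurable (a c1 c2 : ℝ) :
    Measurable fun y : ℝ => if y < a then c1 else c2 :=
  Measurable.ite measurableSet_Iio measurable_const measurable_const

lemma step_intble (a c1 c2 p q : ℝ) :
    IntervalIntegrable (fun y : ℝ => if y < a then c1 else c2) volume p q := by
  rw [intervalIntegrable_iff]
  apply Measure.integrableOn_of_bounded (M := |c1| + |c2|)
    ((measure_mono Set.uIoc_subset_uIcc).trans_lt measure_Icc_lt_top).ne
    (step_measurable a c1 c2).aestronglyMeasurable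
  refine ae_of_all _ fun y => ?_
  by_cases h : y < a <;> simp only [h, if_pos, if_neg, not_false_iff, Real.norm_eq_abs] <;>
    [exact le_add_of_nonneg_right (abs_nonneg _); exact le_add_of_nonneg_left (abs_nonneg _)]

lemma step_int_left (a c1 c2 x : ℝ) (hx0 : 0 ≤ x) (hxa : x ≤ a) :
    ∫ y in (0:ℝ)..x, (if y < a then c1 else c2) = c1 * x := by
  have h : ∀ᵐ y : ℝ, y ∈ Set.uIoc (0:ℝ) x → (if y < a then c1 else c2) = c1 := by
    have hae : ∀ᵐ y : ℝ, y ≠ a := by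
      simpa [ae_iff] using measure_singleton a
    filter_upwards [hae] with y hy hmem
    rw [Set.uIoc_of_le hx0] at hmem
    have : y < a := lt_of_le_of_ne (hmem.2.trans hxa) hy
    simp [this]
  rw [intervalIntegral.integral_congr_ae h]
  simp [mul_comm]

lemma step_int_right (a c1 c2 x : ℝ) (hax : a ≤ x) :
    ∫ y in a..x, (if y < a then c1 else c2) = c2 * (x - a) := by
  have h : Set.EqOn (fun y : ℝ => if y < a then c1 else c2) (fun _ => c2) (Set.uIcc a x) := by
    intro y hy
    rw [Set.uIcc_of_le hax] at hy
    simp [not_lt.mpr hy.1]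
  rw [intervalIntegral.integral_congr h]
  simp [mul_comm]

/-- The vector field Ω. -/
noncomputable def OmTV (a t x : ℝ) : ℝ :=
  if t < tstar a then (if x < a then 1 - 2 / a * x else -1 + 2 / (1 - a) * (x - a)) else 0

/-- `uTV` is a finite energy solution of the total variation flow
`∂ₜu = (sgn uₓ)ₓ` on `𝕋 = [0,1)`: `utTV` is its pointwise time derivative (off the
critical time), and for a.e. `t > 0` there is `Ω(·,t) ∈ H¹(𝕋)` with `|Ω| ≤ 1`
(a selection of the maximal monotone graph `sgn(uₓ) = sgn(0) = [-1,1]` a.e.) such that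
`⟨uₜ, φ⟩ = -∫_𝕋 Ω φₓ` for all smooth 1-periodic `φ`. -/
theorem stmt_16 (a : ℝ) (ha : a ∈ Set.Ioo (0:ℝ) 1) :
    (∀ t : ℝ, 0 < t → t ≠ tstar a → ∀ x ∈ Set.Ioo 0 a ∪ Set.Ioo a 1,
      HasDerivAt (fun s => uTV a s x) (utTV a t x) t) ∧
    ∃ Ω Ω' : ℝ → ℝ → ℝ, ∀ᵐ t ∂(volume.restrict (Set.Ioi (0:ℝ))),
      -- Ω(·,t) ∈ H¹(𝕋):
      (IntervalIntegrable (Ω' t) volume 0 1 ∧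
        MemLp (Ω' t) 2 (volume.restrict (Set.Ioo (0:ℝ) 1)) ∧
        (∀ x ∈ Set.Icc (0:ℝ) 1, Ω t x = Ω t 0 + ∫ y in (0:ℝ)..x, Ω' t y) ∧
        Ω t 1 = Ω t 0) ∧
      -- Ω(·,t) is a selection of sgn(u_x(·,t)) a.e. (u_x = 0 a.e., sgn 0 = [-1,1]):
      (∀ x ∈ Set.Icc (0:ℝ) 1, |Ω t x| ≤ 1) ∧
      -- weak form of the equation:
      (∀ φ : ℝ → ℝ, ContDiff ℝ (⊤ : ℕ∞) φ → Function.Periodic φ 1 →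
        ∫ x in (0:ℝ)..1, utTV a t x * φ x = -∫ x in (0:ℝ)..1, Ω t x * deriv φ x) := by
  obtain ⟨ha0, ha1⟩ := ha
  have ha' : (0:ℝ) < 1 - a := by linarith
  constructor
  · -- time derivative
    intro t ht htne x hx
    rcases lt_or_gt_of_ne htne with hlt | hgt
    · have hev : (fun s => uTV a s x) =ᶠ[nhds t]
          (fun s => if x < a then 1 - 2 / a * s else 2 / (1 - a) * s) := by
        filter_upwards [Iio_mem_nhds hlt] with s hs
        simp only [uTV, if_pos (Set.mem_Iio.mp hs)]
      by_cases hx' : x < a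
      · have : HasDerivAt (fun s : ℝ => 1 - 2 / a * s) (-(2 / a)) t := by
          simpa using ((hasDerivAt_id t).const_mul (2 / a)).const_sub 1
        have h2 : HasDerivAt (fun s => uTV a s x) (-(2 / a)) t :=
          HasDerivAt.congr_of_eventuallyEq (by simpa [hx'] using this) hev
        simpa [utTV, hlt, hx'] using h2
      · have : HasDerivAt (fun s : ℝ => 2 / (1 - a) * s) (2 / (1 - a)) t := by
          simpa using (hasDerivAt_id t).const_mul (2 / (1 - a))
        have h2 : HasDerivAt (fun s => uTV a s x) (2 / (1 - a)) t :=
          HasDerivAt.congr_of_eventuallyEq (by simpa [hx'] using this) hev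
        simpa [utTV, hlt, hx'] using h2
    · have hev : (fun s => uTV a s x) =ᶠ[nhds t] (fun _ => a) := by
        filter_upwards [Ioi_mem_nhds hgt] with s hs
        simp [uTV, not_lt.mpr (le_of_lt (Set.mem_Ioi.mp hs))]
      have h2 : HasDerivAt (fun s => uTV a s x) 0 t :=
        HasDerivAt.congr_of_eventuallyEq (hasDerivAt_const t a) hev
      simpa [utTV, not_lt.mpr (le_of_lt hgt)] using h2
  · refine ⟨OmTV a, utTV a, ae_of_all _ fun t => ?_⟩
    by_cases hts : t < tstar a
    · -- main case
      have hne : a ≠ 0 := ne_of_gt ha0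
      have hne' : (1:ℝ) - a ≠ 0 := ne_of_gt ha'
      have hUt : utTV a t = fun y => if y < a then -(2 / a) else 2 / (1 - a) := by
        funext y; simp [utTV, hts]
      refine ⟨⟨?_, ?_, ?_, ?_⟩, ?_, ?_⟩
      · rw [hUt]; exact step_intble _ _ _ _ _
      · rw [hUt]
        haveI : IsFiniteMeasure (volume.restrict (Set.Ioo (0:ℝ) 1)) := by
          constructor
          rw [Measure.restrict_apply_univ]
          simp [Real.volume_Ioo]
        refine MemLp.of_bound ((step_measurable a _ _).aestronglyMeasurable) (|(-(2/a))| + |2/(1-a)|)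
          (ae_of_all _ fun y => ?_)
        by_cases h : y < a <;> simp only [h, if_pos, if_neg, not_false_iff, Real.norm_eq_abs] <;>
          [exact le_add_of_nonneg_right (abs_nonneg _); exact le_add_of_nonneg_left (abs_nonneg _)]
      · intro x hx
        rw [hUt]
        have h0 : OmTV a t 0 = 1 := by simp [OmTV, hts, ha0]
        rcases le_or_gt x a with hxa | hax
        · rw [step_int_left a _ _ x hx.1 hxa, h0]
          rcases lt_or_eq_of_le hxa with h | h
          · simp [OmTV, hts, h]; ring
          · have h2 : 2 / a * a = 2 := div_mul_cancel₀ 2 hne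
            rw [h]
            simp [OmTV, hts]
            linarith
        · rw [← intervalIntegral.integral_add_adjacent_intervals
            (step_intble a _ _ 0 a) (step_intble a _ _ a x),
            step_int_left a _ _ a (le_of_lt ha0) le_rfl,
            step_int_right a _ _ x (le_of_lt hax), h0]
          have : ¬ x < a := not_lt.mpr hax.le
          simp [OmTV, hts, this]
          field_simp
          ring
      · have : ¬ (1:ℝ) < a := not_lt.mpr ha1.le
        have h2 : 2 / (1 - a) * (1 - a) = 2 := div_mul_cancel₀ 2 hne'
        simp [OmTV, hts, this, ha0, h2]
        linarith
      · intro x hx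
        by_cases h : x < a
        · have h1 : 2 / a * x ≤ 2 := by
            rw [div_mul_eq_mul_div, div_le_iff₀ ha0]; nlinarith [hx.1]
          have h2 : 0 ≤ 2 / a * x := mul_nonneg (by positivity) hx.1
          rw [abs_le]; constructor <;> simp [OmTV, hts, h] <;> linarith
        · push_neg at h
          have h1 : 2 / (1 - a) * (x - a) ≤ 2 := by
            rw [div_mul_eq_mul_div, div_le_iff₀ ha']; nlinarith [hx.2]
          have h2 : 0 ≤ 2 / (1 - a) * (x - a) := mul_nonneg (by positivity) (by linarith)
          rw [abs_le]; constructor <;> simp [OmTV, hts, not_lt.mpr h] <;> linarith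
      · intro φ hφ hper
        have hφd : ∀ x : ℝ, HasDerivAt φ (deriv φ x) x := fun x =>
          (hφ.differentiable (by simp)).differentiableAt.hasDerivAt
        have hφc : Continuous φ := hφ.continuous
        have hφ'c : Continuous (deriv φ) := hφ.continuous_deriv (by simp)
        set g : ℝ → ℝ := fun x => 1 - 2 / a * x with hg
        set h : ℝ → ℝ := fun x => -1 + 2 / (1 - a) * (x - a) with hh
        have hgc : Continuous g := by fun_prop
        have hhc : Continuous h := by fun_prop
        have hgd : ∀ x : ℝ, HasDerivAt g (-(2 / a)) x := fun x => by
          simpa [hg] using ((hasDerivAt_id x).const_mul (2 / a)).const_sub 1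
        have hhd : ∀ x : ℝ, HasDerivAt h (2 / (1 - a)) x := fun x => by
          simpa [hh] using
            (((hasDerivAt_id x).sub_const a).const_mul (2 / (1 - a))).const_add (-1)
        have hae : ∀ᵐ y : ℝ, y ≠ a := by simpa [ae_iff] using measure_singleton a
        have h2a : 2 / a * a = 2 := div_mul_cancel₀ 2 hne
        -- LHS pieces
        have hL1 : ∫ x in (0:ℝ)..a, utTV a t x * φ x
            = ∫ x in (0:ℝ)..a, (fun _ : ℝ => -(2 / a)) x * φ x := by
          rw [hUt]
          apply intervalIntegral.integral_congr_ae
          filter_upwards [hae] with y hy hmem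
          rw [Set.uIoc_of_le ha0.le] at hmem
          simp [lt_of_le_of_ne hmem.2 hy]
        have hL2 : ∫ x in a..(1:ℝ), utTV a t x * φ x
            = ∫ x in a..(1:ℝ), (fun _ : ℝ => 2 / (1 - a)) x * φ x := by
          rw [hUt]
          apply intervalIntegral.integral_congr
          intro y hy
          rw [Set.uIcc_of_le ha1.le] at hy
          simp [not_lt.mpr hy.1]
        have hLi1 : IntervalIntegrable (fun x => utTV a t x * φ x) volume 0 a := by
          rw [hUt]; exact (step_intble a _ _ 0 a).mul_continuousOn hφc.continuousOn
        have hLi2 : IntervalIntegrable (fun x => utTV a t x * φ x) volume a 1 := by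
          rw [hUt]; exact (step_intble a _ _ a 1).mul_continuousOn hφc.continuousOn
        -- RHS pieces
        have hOg : ∀ y ∈ Set.uIcc (0:ℝ) a, OmTV a t y * deriv φ y = g y * deriv φ y := by
          intro y hy
          rw [Set.uIcc_of_le ha0.le] at hy
          rcases lt_or_eq_of_le hy.2 with h' | h'
          · simp [OmTV, hts, h', hg]
          · subst h'
            simp [OmTV, hts, hg, hh, h2a]
            ring
        have hOh : ∀ y ∈ Set.uIcc a (1:ℝ), OmTV a t y * deriv φ y = h y * deriv φ y := by
          intro y hy
          rw [Set.uIcc_of_le ha1.le] at hy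
          simp [OmTV, hts, not_lt.mpr hy.1, hh]
        have hR1 : ∫ x in (0:ℝ)..a, OmTV a t x * deriv φ x
            = ∫ x in (0:ℝ)..a, g x * deriv φ x :=
          intervalIntegral.integral_congr hOg
        have hR2 : ∫ x in a..(1:ℝ), OmTV a t x * deriv φ x
            = ∫ x in a..(1:ℝ), h x * deriv φ x :=
          intervalIntegral.integral_congr hOh
        have hRi1 : IntervalIntegrable (fun x => OmTV a t x * deriv φ x) volume 0 a :=
          ((hgc.mul hφ'c).intervalIntegrable 0 a).congr_ae
            ((ae_restrict_iff' measurableSet_uIoc).mpr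
              (ae_of_all _ fun y hy => (hOg y (Set.uIoc_subset_uIcc hy)).symm))
        have hRi2 : IntervalIntegrable (fun x => OmTV a t x * deriv φ x) volume a 1 :=
          ((hhc.mul hφ'c).intervalIntegrable a 1).congr_ae
            ((ae_restrict_iff' measurableSet_uIoc).mpr
              (ae_of_all _ fun y hy => (hOh y (Set.uIoc_subset_uIcc hy)).symm))
        have IBP1 := intervalIntegral.integral_mul_deriv_eq_deriv_mul
          (u := g) (v := φ) (u' := fun _ => -(2 / a)) (v' := deriv φ)
          (fun x _ => hgd x) (fun x _ => hφd x)
          intervalIntegrable_const ((hφ'c.intervalIntegrable 0 a))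
        have IBP2 := intervalIntegral.integral_mul_deriv_eq_deriv_mul
          (u := h) (v := φ) (u' := fun _ => 2 / (1 - a)) (v' := deriv φ)
          (fun x _ => hhd x) (fun x _ => hφd x)
          intervalIntegrable_const ((hφ'c.intervalIntegrable a 1))
        have hga : g a = -1 := by simp [hg, h2a]; linarith
        have hg0 : g 0 = 1 := by simp [hg]
        have hha : h a = -1 := by simp [hh]
        have hh1 : h 1 = 1 := by
          have h2 : 2 / (1 - a) * (1 - a) = 2 := div_mul_cancel₀ 2 hne'
          simp [hh, h2]; linarith
        have hφ1 : φ 1 = φ 0 := by simpa using hper 0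
        have hsplitL := (intervalIntegral.integral_add_adjacent_intervals hLi1 hLi2).symm
        have hsplitR := (intervalIntegral.integral_add_adjacent_intervals hRi1 hRi2).symm
        rw [hsplitL, hsplitR, hR1, hR2, IBP1, IBP2, hL1, hL2, hga, hg0, hha, hh1, hφ1]
        ring
    · -- trivial case t ≥ tstar
      have hUt : utTV a t = fun _ => 0 := by funext y; simp [utTV, hts]
      have hOm : ∀ x, OmTV a t x = 0 := fun x => by simp [OmTV, hts]
      refine ⟨⟨by rw [hUt]; exact intervalIntegrable_const, ?_, ?_, by simp [hOm]⟩,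
        fun x _ => by simp [hOm], fun φ _ _ => by simp [hUt, hOm]⟩
      · rw [hUt]; exact memLp_const 0
      · intro x hx; simp [hOm, hUt]
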